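/- arXiv:2605.30929 — 2 statements merged into one kernel-verified Lean document; each statement's English description precedes it below -/
import Mathlib

section
/- Let n, m ≥ 1, let A ∈ GL_n(L) and B ∈ GL_m(L) be monomial matrices (each row and each column contains exactly one nonzero entry), and let C = (c_{ij}) ∈ M_{n×m}(L). Let g ∈ GL_{n+m}(L) be the block matrix [[A, C], [0, B]]. For 1 ≤ i ≤ n let α_i = v(unique nonzero entry of row i of A), for 1 ≤ j ≤ m let β_j = v(unique nonzero entry of column j of B), and let γ_1 ≤ γ_2 ≤ ⋯ ≤ γ_{n+m} be the nondecreasing rearrangement of the multiset {α_1,…,α_n, β_1,…,β_m}. Then g ∈ GL_{n+m}(𝒪_L) · diag(t^{γ_1},…,t^{γ_{n+m}}) · GL_{n+m}(𝒪_L) if and only if for every (i,j), either c_{ij} = 0 or v(c_{ij}) ≥ min{α_i, β_j}. -/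
/-!
Permuting rows by `π` and columns by `ρ` turns `A` and `B` into diagonal matrices, so it suffices
to treat `g = [[diag a, C], [0, diag b]]`. If the condition holds, every `c_{ij}` is cleared by an
integral elementary operation: a column operation against `a_i` when `v(a_i) ≤ v(b_j)`, a row
operation against `b_j` otherwise. What remains is `diag(a, b)`, which differs from `diag(t^γ)` by
a diagonal unit of `𝒪_L` and a permutation.

Conversely, if `g = U diag(t^γ) V` with `U, V` integral, expanding a `k × k` minor of `g` by
multilinearity shows that its valuation is at least the smallest sum of `k` of the `γ`s. Let
`c = min(α_i, β_j)`, and take the rows and columns of the `α`s and `β`s below `c`, together with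
row `i` and column `j`. This minor is block triangular with determinant `∏ a · c_{ij} · ∏ b`, and
any `k` of the `γ`s sum to at least `(∑_{γ < c} γ) + c`. Together these give `v(c_{ij}) ≥ c`.
-/

open Matrix

namespace Matrix

theorem det_mul_eq_sum_det_submatrix_mul_prod {R ι κ : Type*} [CommRing R] [Fintype ι]
    [DecidableEq ι] [Fintype κ] (X : Matrix ι κ R) (Y : Matrix κ ι R) :
    (X * Y).det = ∑ s : ι → κ, (X.submatrix id s).det * ∏ i, Y (s i) i := by
  simp only [det_apply', mul_apply, Finset.prod_univ_sum, Fintype.piFinset_univ, Finset.mul_sum,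
    Finset.sum_mul, submatrix_apply, id, Finset.prod_mul_distrib]
  rw [Finset.sum_comm]
  refine Finset.sum_congr rfl fun s _ => Finset.sum_congr rfl fun σ _ => ?_
  ring

theorem isUnit_det_submatrix_equiv {R ι ι' : Type*} [CommRing R] [Fintype ι] [DecidableEq ι]
    [Fintype ι'] [DecidableEq ι'] (A : Matrix ι ι R) (e₁ e₂ : ι' ≃ ι) :
    IsUnit (A.submatrix e₁ e₂).det ↔ IsUnit A.det := by
  have h : A.submatrix e₁ e₂ = (A.submatrix id (e₁.symm.trans e₂)).submatrix e₁ e₁ := by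
    ext; simp
  rw [h, det_submatrix_equiv_self, det_permute']
  exact IsUnit.mul_iff.trans (and_iff_right ((Equiv.Perm.sign _).isUnit.map (Int.castRingHom R)))

theorem submatrix_id_perm_eq_diagonal {R ι : Type*} [Zero R] [DecidableEq ι] {A : Matrix ι ι R}
    {ρ : Equiv.Perm ι} (hA : ∀ i j, A i j ≠ 0 ↔ j = ρ i) :
    A.submatrix id ρ = diagonal fun i => A i (ρ i) := by
  ext i i'
  by_cases h : i = i'
  · subst h; simp
  · rw [diagonal_apply_ne _ h]
    exact not_not.1 fun hne => h (ρ.injective ((hA _ _).1 hne)).symm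

theorem submatrix_perm_id_eq_diagonal {R κ : Type*} [Zero R] [DecidableEq κ] {B : Matrix κ κ R}
    {π : Equiv.Perm κ} (hB : ∀ i j, B i j ≠ 0 ↔ i = π j) :
    B.submatrix π id = diagonal fun j => B (π j) j := by
  ext j' j
  by_cases h : j' = j
  · subst h; simp
  · rw [diagonal_apply_ne _ h]
    exact not_not.1 fun hne => h (π.injective ((hB _ _).1 hne))

theorem fromBlocks_submatrix_sumCongr {R ι κ : Type*} [Zero R] (A : Matrix ι ι R)
    (B : Matrix κ κ R) (C : Matrix ι κ R) (ρ : Equiv.Perm ι) (π : Equiv.Perm κ) :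
    (fromBlocks A C 0 B).submatrix (Equiv.sumCongr (Equiv.refl ι) π)
        (Equiv.sumCongr ρ (Equiv.refl κ)) =
      fromBlocks (A.submatrix id ρ) C 0 (B.submatrix π id) := by
  ext (i | j) (i | j) <;> rfl

theorem fromBlocks_mul_add_mul_eq {R ι κ : Type*} [Semiring R] [Fintype ι] [DecidableEq ι]
    [Fintype κ] [DecidableEq κ] (A : Matrix ι ι R) (B : Matrix κ κ R) (E F : Matrix ι κ R) :
    fromBlocks A (A * F + E * B) 0 B =
      fromBlocks 1 E 0 1 * fromBlocks A 0 0 B * fromBlocks 1 F 0 1 := by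
  simp [fromBlocks_multiply]

theorem exists_det_submatrix_fromBlocks_diagonal {R ι κ : Type*} [CommRing R] [Fintype ι]
    [DecidableEq ι] [Fintype κ] [DecidableEq κ] (a : ι → R) (b : κ → R) (C : Matrix ι κ R)
    {S₁ : Finset ι} {S₂ : Finset κ} {i : ι} {j : κ} (hi : i ∉ S₁) (hj : j ∉ S₂) :
    ∃ r c : (S₁ ⊕ Unit) ⊕ S₂ → ι ⊕ κ,
      ((fromBlocks (diagonal a) C 0 (diagonal b)).submatrix r c).det =
        (∏ s ∈ S₁, a s) * C i j * ∏ s ∈ S₂, b s := by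
  let Z₁₁ : Matrix (S₁ ⊕ Unit) (S₁ ⊕ Unit) R :=
    fromBlocks (diagonal fun s => a s) (of fun s _ => C s j) 0 (of fun _ _ => C i j)
  let Z₁₂ : Matrix (S₁ ⊕ Unit) S₂ R := of fun p s => C (Sum.elim Subtype.val (fun _ => i) p) s
  refine ⟨Sum.elim (Sum.elim (Sum.inl ∘ (↑)) fun _ => Sum.inl i) (Sum.inr ∘ (↑)),
    Sum.elim (Sum.elim (Sum.inl ∘ (↑)) fun _ => Sum.inr j) (Sum.inr ∘ (↑)), ?_⟩
  have hblocks : (fromBlocks (diagonal a) C 0 (diagonal b)).submatrix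
      (Sum.elim (Sum.elim (Sum.inl ∘ (↑)) fun _ => Sum.inl i) (Sum.inr ∘ (↑)))
      (Sum.elim (Sum.elim (Sum.inl ∘ (↑)) fun _ => Sum.inr j) (Sum.inr ∘ (↑))) =
      fromBlocks Z₁₁ Z₁₂ 0 (diagonal fun s : S₂ => b s) := by
    ext ((s | _) | s) ((s' | _) | s')
    all_goals simp only [Z₁₁, Z₁₂, submatrix_apply, Sum.elim_inl, Sum.elim_inr,
      Function.comp_apply, fromBlocks_apply₁₁, fromBlocks_apply₁₂, fromBlocks_apply₂₁,
      fromBlocks_apply₂₂, of_apply, zero_apply]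
    · simp [diagonal_apply]
    · exact diagonal_apply_ne _ fun h => hi (h ▸ s'.2)
    · exact diagonal_apply_ne _ fun h => hj (h ▸ s.2)
    · simp [diagonal_apply]
  rw [hblocks, det_fromBlocks_zero₂₁, det_fromBlocks_zero₂₁, det_diagonal, det_diagonal,
    det_unique, Finset.prod_coe_sort, Finset.prod_coe_sort]
  rfl

end Matrix

open Finset in
theorem Finset.sum_add_card_nsmul_le_sum_add_card_nsmul {X M : Type*} [AddCommMonoid M]
    [LinearOrder M] [IsOrderedCancelAddMonoid M] {γ : X → M} {c : M} {T : Finset X}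
    (hT : ∀ x, x ∈ T ↔ γ x < c) (S : Finset X) :
    ∑ x ∈ T, γ x + #S • c ≤ ∑ x ∈ S, γ x + #T • c := by
  classical
  rw [← sum_inter_add_sum_sdiff T S, ← sum_inter_add_sum_sdiff S T,
    ← card_inter_add_card_sdiff S T, ← card_inter_add_card_sdiff T S, inter_comm T S,
    add_nsmul, add_nsmul]
  have hST : ∀ x ∈ S \ T, c ≤ γ x := fun x hx => not_lt.1 ((hT x).not.1 (mem_sdiff.1 hx).2)
  have hTS : ∀ x ∈ T \ S, γ x ≤ c := fun x hx => ((hT x).1 (mem_sdiff.1 hx).1).le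
  calc ∑ x ∈ S ∩ T, γ x + ∑ x ∈ T \ S, γ x + (#(S ∩ T) • c + #(S \ T) • c)
      ≤ ∑ x ∈ S ∩ T, γ x + #(T \ S) • c + (#(S ∩ T) • c + ∑ x ∈ S \ T, γ x) := by
        gcongr
        exacts [sum_le_card_nsmul _ _ _ hTS, card_nsmul_le_sum _ _ _ hST]
    _ = _ := by abel

namespace AddValuation

section CommRing

variable {R Γ₀ : Type*} [CommRing R] [LinearOrderedAddCommMonoidWithTop Γ₀]
  (w : AddValuation R Γ₀)

theorem map_prod {ι : Type*} (s : Finset ι) (f : ι → R) :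
    w (∏ i ∈ s, f i) = ∑ i ∈ s, w (f i) := by
  classical
  induction s using Finset.induction_on with
  | empty => simp [w.map_one]
  | insert a s ha ih => rw [Finset.prod_insert ha, Finset.sum_insert ha, w.map_mul, ih]

theorem map_det_nonneg {ι : Type*} [Fintype ι] [DecidableEq ι] {M : Matrix ι ι R}
    (hM : ∀ i j, 0 ≤ w (M i j)) : 0 ≤ w M.det := by
  rw [det_apply']
  refine w.map_le_sum fun σ _ => ?_
  have hsign : w (Equiv.Perm.sign σ : R) = 0 := by
    rcases Int.units_eq_one_or (Equiv.Perm.sign σ) with h | h <;> simp [h, w.map_neg, w.map_one]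
  rw [w.map_mul, w.map_prod, hsign, zero_add]
  exact Finset.sum_nonneg fun i _ => hM _ _

theorem le_map_det_submatrix_mul_diagonal_mul {ι κ ι₁ ι₂ : Type*} [Fintype ι] [DecidableEq ι]
    [Fintype κ] [DecidableEq κ] {U : Matrix ι₁ κ R} {V : Matrix κ ι₂ R}
    (hU : ∀ i k, 0 ≤ w (U i k)) (hV : ∀ k j, 0 ≤ w (V k j)) (d : κ → R) (r : ι → ι₁)
    (c : ι → ι₂) {g : Γ₀} (hg : ∀ s : ι → κ, Function.Injective s → g ≤ ∑ p, w (d (s p))) :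
    g ≤ w ((U * diagonal d * V).submatrix r c).det := by
  rw [submatrix_mul _ _ r id c Function.bijective_id, det_mul_eq_sum_det_submatrix_mul_prod]
  refine w.map_le_sum fun s _ => ?_
  by_cases hs : Function.Injective s
  · have hminor : ((U * diagonal d).submatrix r id).submatrix id s =
        U.submatrix r s * diagonal (d ∘ s) := by
      ext p q
      simp [mul_diagonal]
    rw [hminor, det_mul, det_diagonal, w.map_mul, w.map_mul, w.map_prod, w.map_prod]
    calc g ≤ 0 + ∑ p, w (d (s p)) + 0 := by simpa using hg s hs
      _ ≤ _ := add_le_add (add_le_add (w.map_det_nonneg fun _ _ => hU _ _) le_rfl)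
          (Finset.sum_nonneg fun _ _ => hV _ _)
  · obtain ⟨p, q, hpq, hne⟩ : ∃ p q, s p = s q ∧ p ≠ q := by
      simpa [Function.Injective] using hs
    rw [det_zero_of_column_eq hne (fun k => by simp [hpq]), zero_mul, w.map_zero]
    exact le_top

end CommRing

section Field

variable {K : Type*} [Field K] (w : AddValuation K (WithTop ℤ))

theorem map_zpow_of_eq_one {t : K} (ht : w t = 1) (z : ℤ) : w (t ^ z) = z := by
  have hnat : ∀ k : ℕ, w (t ^ k) = k := fun k => by
    rw [w.map_pow, ht]; norm_cast; simp
  obtain ⟨k, rfl | rfl⟩ := z.eq_nat_or_neg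
  · simpa using hnat k
  · rw [_root_.zpow_neg, w.map_inv, zpow_natCast, hnat]; rfl

theorem nonneg_map_div_of_le {x y : K} (hy : y ≠ 0) (h : w y ≤ w x) : 0 ≤ w (x / y) := by
  rwa [← WithTop.add_le_add_iff_right ((w.ne_top_iff).2 hy), zero_add, ← w.map_mul,
    div_mul_cancel₀ x hy]

theorem exists_unit_of_map_eq_zero {O : Subring K} (hO : ∀ x, x ∈ O ↔ 0 ≤ w x) {x : K}
    (hx : w x = 0) : ∃ u : Oˣ, (u : K) = x := by
  have hx0 : x ≠ 0 := (w.ne_top_iff).1 (by simp [hx])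
  exact ⟨⟨⟨x, (hO x).2 hx.ge⟩, ⟨x⁻¹, (hO _).2 (by simp [w.map_inv, hx])⟩,
    Subtype.ext (mul_inv_cancel₀ hx0), Subtype.ext (inv_mul_cancel₀ hx0)⟩, rfl⟩

end Field

end AddValuation

theorem exists_addValuation_eq {L : Type*} [Field L] {v : L → ℤ}
    (hv_mul : ∀ x y : L, x ≠ 0 → y ≠ 0 → v (x * y) = v x + v y)
    (hv_add : ∀ x y : L, x ≠ 0 → y ≠ 0 → x + y ≠ 0 → min (v x) (v y) ≤ v (x + y)) :
    ∃ w : AddValuation L (WithTop ℤ), ∀ x, x ≠ 0 → w x = v x := by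
  classical
  have hv_one : v 1 = 0 := by simpa using hv_mul 1 1 one_ne_zero one_ne_zero
  refine ⟨AddValuation.of (fun x => if x = 0 then ⊤ else (v x : WithTop ℤ)) (by simp)
    (by simp [hv_one]) (fun x y => ?_) (fun x y => ?_), fun x hx => by simp [hx]⟩
  · by_cases hx : x = 0
    · simp [hx]
    by_cases hy : y = 0
    · simp [hy]
    by_cases hxy : x + y = 0
    · simp [hxy]
    simpa [hx, hy, hxy] using hv_add x y hx hy hxy
  · by_cases hx : x = 0
    · simp [hx]
    by_cases hy : y = 0
    · simp [hy]
    simp [hx, hy, hv_mul x y hx hy]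

section DoubleCoset

variable {L : Type*} [Field L] {ι ι' κ : Type*} [Fintype ι] [DecidableEq ι] [Fintype ι']
  [DecidableEq ι'] [Fintype κ] [DecidableEq κ]

/-- `M ∈ GL_ι(O) · D · GL_ι(O)`. -/
def InDoubleCoset (O : Subring L) (M D : Matrix ι ι L) : Prop :=
  ∃ U V : Matrix ι ι O, IsUnit U.det ∧ IsUnit V.det ∧ M = U.map O.subtype * D * V.map O.subtype

variable {O : Subring L}

theorem InDoubleCoset.submatrix_diagonal {M : Matrix ι ι L} {d : ι → L}
    (h : InDoubleCoset O M (diagonal d)) (σ τ e : ι' ≃ ι) :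
    InDoubleCoset O (M.submatrix σ τ) (diagonal (d ∘ e)) := by
  obtain ⟨U, V, hU, hV, rfl⟩ := h
  refine ⟨U.submatrix σ e, V.submatrix e τ, (isUnit_det_submatrix_equiv U σ e).2 hU,
    (isUnit_det_submatrix_equiv V e τ).2 hV, ?_⟩
  rw [← submatrix_diagonal_equiv, ← submatrix_map, ← submatrix_map, submatrix_mul_equiv,
    submatrix_mul_equiv]

theorem inDoubleCoset_submatrix_diagonal_iff {M : Matrix ι ι L} {d : ι → L} (σ τ e : ι' ≃ ι) :
    InDoubleCoset O (M.submatrix σ τ) (diagonal (d ∘ e)) ↔ InDoubleCoset O M (diagonal d) := by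
  refine ⟨fun h => ?_, fun h => h.submatrix_diagonal σ τ e⟩
  simpa [Function.comp_assoc] using h.submatrix_diagonal σ.symm τ.symm e.symm

variable {w : AddValuation L (WithTop ℤ)} (hO : ∀ x, x ∈ O ↔ 0 ≤ w x) {t : L} (ht : w t = 1)
  {a : ι → L} {b : κ → L} {α : ι → ℤ} {β : κ → ℤ} (ha : ∀ i, w (a i) = α i)
  (hb : ∀ j, w (b j) = β j)
include hO ht ha hb

theorem inDoubleCoset_fromBlocks_diagonal {C : Matrix ι κ L}
    (hC : ∀ i j, ((min (α i) (β j) : ℤ) : WithTop ℤ) ≤ w (C i j)) :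
    InDoubleCoset O (fromBlocks (diagonal a) C 0 (diagonal b))
      (diagonal fun x => t ^ Sum.elim α β x) := by
  have ha0 : ∀ i, a i ≠ 0 := fun i => (w.ne_top_iff).1 (by simp [ha])
  have hb0 : ∀ j, b j ≠ 0 := fun j => (w.ne_top_iff).1 (by simp [hb])
  have ht0 : t ≠ 0 := (w.ne_top_iff).1 (by simp [ht])
  set F : Matrix ι κ L := of fun i j => if α i ≤ β j then C i j / a i else 0
  set E : Matrix ι κ L := of fun i j => if α i ≤ β j then 0 else C i j / b j
  have hF : ∀ i j, F i j ∈ O := fun i j => by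
    by_cases h : α i ≤ β j
    · simpa [F, h, hO] using w.nonneg_map_div_of_le (ha0 i) (by simpa [ha, h] using hC i j)
    · simp [F, h]
  have hE : ∀ i j, E i j ∈ O := fun i j => by
    by_cases h : α i ≤ β j
    · simp [E, h]
    · simpa [E, h, hO] using w.nonneg_map_div_of_le (hb0 j)
        (by simpa [hb, (not_le.1 h).le] using hC i j)
  have hC' : diagonal a * F + E * diagonal b = C := by
    ext i j
    by_cases h : α i ≤ β j
    · simp [F, E, h, mul_div_cancel₀ _ (ha0 i)]
    · simp [F, E, h, div_mul_cancel₀ _ (hb0 j)]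
  choose u hu using fun x => w.exists_unit_of_map_eq_zero hO
    (x := Sum.elim a b x * (t ^ Sum.elim α β x)⁻¹)
    (by rcases x with i | j <;> simp [w.map_mul, w.map_inv, w.map_zpow_of_eq_one ht, ha, hb])
  have hdiag : ((diagonal fun x => O.subtype (u x)) * diagonal fun x => t ^ Sum.elim α β x) =
      fromBlocks (diagonal a) 0 0 (diagonal b) := by
    rw [diagonal_mul_diagonal, fromBlocks_diagonal]
    congr 1
    ext x
    simp [hu, zpow_ne_zero _ ht0]
  refine ⟨fromBlocks 1 (of fun i j => ⟨E i j, hE i j⟩) 0 1 * diagonal (fun x => (u x : O)),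
    fromBlocks 1 (of fun i j => ⟨F i j, hF i j⟩) 0 1, by simp, by simp, ?_⟩
  rw [Matrix.map_mul, fromBlocks_map, fromBlocks_map, diagonal_map (map_zero _)]
  simp only [Matrix.map_one _ (map_zero _) (map_one _), Matrix.map_zero _ (map_zero _)]
  rw [show (of fun i j => (⟨E i j, hE i j⟩ : O)).map O.subtype = E from rfl,
    show (of fun i j => (⟨F i j, hF i j⟩ : O)).map O.subtype = F from rfl,
    Matrix.mul_assoc (fromBlocks 1 E 0 1), hdiag, ← hC', fromBlocks_mul_add_mul_eq]

theorem coe_min_le_of_inDoubleCoset_fromBlocks_diagonal {C : Matrix ι κ L}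
    (h : InDoubleCoset O (fromBlocks (diagonal a) C 0 (diagonal b))
      (diagonal fun x => t ^ Sum.elim α β x)) (i : ι) (j : κ) :
    ((min (α i) (β j) : ℤ) : WithTop ℤ) ≤ w (C i j) := by
  obtain ⟨U, V, -, -, hUV⟩ := h
  set c₀ := min (α i) (β j)
  set S₁ := Finset.univ.filter fun i' => α i' < c₀
  set S₂ := Finset.univ.filter fun j' => β j' < c₀
  obtain ⟨r, c, hdet⟩ := exists_det_submatrix_fromBlocks_diagonal a b C
    (S₁ := S₁) (S₂ := S₂) (i := i) (j := j) (by simp [S₁, c₀]) (by simp [S₂, c₀])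
  have hbound := w.le_map_det_submatrix_mul_diagonal_mul (U := U.map O.subtype)
    (V := V.map O.subtype) (fun _ _ => (hO _).1 (SetLike.coe_mem _))
    (fun _ _ => (hO _).1 (SetLike.coe_mem _)) (fun x => t ^ Sum.elim α β x) r c
    (g := ((∑ s ∈ S₁, α s + ∑ s ∈ S₂, β s + c₀ : ℤ) : WithTop ℤ)) fun s hs => by
      simp only [w.map_zpow_of_eq_one ht]
      norm_cast
      -- the minor has `#S₁ + #S₂ + 1` rows, exactly one more than there are values below `c₀`
      have key := Finset.sum_add_card_nsmul_le_sum_add_card_nsmul (γ := Sum.elim α β) (c := c₀)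
        (T := S₁.disjSum S₂) (by rintro (i' | j') <;> simp [S₁, S₂]) (Finset.univ.map ⟨s, hs⟩)
      simp only [Finset.sum_sumElim, Finset.card_disjSum, Finset.sum_map, Finset.card_map,
        Finset.card_univ, Fintype.card_sum, Fintype.card_coe, Fintype.card_unit, nsmul_eq_mul,
        Function.Embedding.coeFn_mk] at key
      push_cast at key
      linarith
  rw [← hUV, hdet, w.map_mul, w.map_mul, w.map_prod, w.map_prod] at hbound
  have hcancel : ((∑ s ∈ S₁, α s + ∑ s ∈ S₂, β s : ℤ) : WithTop ℤ) + c₀ ≤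
      ((∑ s ∈ S₁, α s + ∑ s ∈ S₂, β s : ℤ) : WithTop ℤ) + w (C i j) := by
    convert hbound using 1
    · push_cast; rfl
    · push_cast [ha, hb]; abel
  exact (WithTop.add_le_add_iff_left WithTop.coe_ne_top).1 hcancel

theorem inDoubleCoset_fromBlocks_diagonal_iff (C : Matrix ι κ L) :
    InDoubleCoset O (fromBlocks (diagonal a) C 0 (diagonal b))
        (diagonal fun x => t ^ Sum.elim α β x) ↔
      ∀ i j, ((min (α i) (β j) : ℤ) : WithTop ℤ) ≤ w (C i j) :=
  ⟨coe_min_le_of_inDoubleCoset_fromBlocks_diagonal hO ht ha hb,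
    inDoubleCoset_fromBlocks_diagonal hO ht ha hb⟩

end DoubleCoset

theorem stmt_1_general {L : Type*} [Field L] (v : L → ℤ) (t : L)
    (hv_mul : ∀ x y : L, x ≠ 0 → y ≠ 0 → v (x * y) = v x + v y)
    (hv_add : ∀ x y : L, x ≠ 0 → y ≠ 0 → x + y ≠ 0 → min (v x) (v y) ≤ v (x + y))
    (ht0 : t ≠ 0) (ht1 : v t = 1)
    (O : Subring L) (hO : ∀ x : L, x ∈ O ↔ x = 0 ∨ 0 ≤ v x)
    (n m : ℕ)
    (A : Matrix (Fin n) (Fin n) L)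
    (B : Matrix (Fin m) (Fin m) L)
    -- `A` is monomial: the unique nonzero entry of row `i` sits in column `ρ i`
    (ρ : Equiv.Perm (Fin n)) (hAρ : ∀ i j, A i j ≠ 0 ↔ j = ρ i)
    -- `B` is monomial: the unique nonzero entry of column `j` sits in row `π j`
    (π : Equiv.Perm (Fin m)) (hBπ : ∀ i j, B i j ≠ 0 ↔ i = π j)
    (C : Matrix (Fin n) (Fin m) L)
    -- `γ` is the nondecreasing rearrangement of the multiset `{α_1,…,α_n, β_1,…,β_m}`
    (γ : Fin (n + m) → ℤ)
    (e : Fin (n + m) ≃ (Fin n ⊕ Fin m))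
    (hγ : ∀ i, γ i = Sum.elim (fun i' => v (A i' (ρ i'))) (fun j' => v (B (π j') j')) (e i)) :
    (∃ U V : Matrix (Fin (n + m)) (Fin (n + m)) O, IsUnit U.det ∧ IsUnit V.det ∧
        Matrix.reindex finSumFinEquiv finSumFinEquiv (Matrix.fromBlocks A C 0 B) =
          U.map (fun x => (x : L)) * Matrix.diagonal (fun i => t ^ (γ i)) *
            V.map (fun x => (x : L)))
      ↔ ∀ i j, C i j = 0 ∨ min (v (A i (ρ i))) (v (B (π j) j)) ≤ v (C i j) := by
  obtain ⟨w, hw⟩ := exists_addValuation_eq hv_mul hv_add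
  have hle : ∀ (c : ℤ) (x : L), (c : WithTop ℤ) ≤ w x ↔ x = 0 ∨ c ≤ v x := fun c x => by
    by_cases hx : x = 0
    · simp [hx]
    · simp [hx, hw x hx]
  have hOw : ∀ x, x ∈ O ↔ 0 ≤ w x := fun x => (hO x).trans (hle 0 x).symm
  have hwt : w t = 1 := by rw [hw t ht0, ht1]; rfl
  set φ := Equiv.sumCongr (Equiv.refl (Fin n)) π
  set ψ := Equiv.sumCongr ρ (Equiv.refl (Fin m))
  have hreindex : reindex finSumFinEquiv finSumFinEquiv (fromBlocks A C 0 B) =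
      ((fromBlocks A C 0 B).submatrix φ ψ).submatrix (finSumFinEquiv.symm.trans φ.symm)
        (finSumFinEquiv.symm.trans ψ.symm) := by
    ext; simp
  have hdiag : (fun i => t ^ γ i) =
      (fun x => t ^ Sum.elim (fun i' => v (A i' (ρ i'))) (fun j' => v (B (π j') j')) x) ∘ e :=
    funext fun i => by simp [hγ]
  change InDoubleCoset O _ _ ↔ _
  rw [hreindex, hdiag, inDoubleCoset_submatrix_diagonal_iff, fromBlocks_submatrix_sumCongr,
    submatrix_id_perm_eq_diagonal hAρ, submatrix_perm_id_eq_diagonal hBπ,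
    inDoubleCoset_fromBlocks_diagonal_iff hOw hwt (fun i => hw _ ((hAρ _ _).2 rfl))
      (fun j => hw _ ((hBπ _ _).2 rfl))]
  simp only [hle]

/-- Cartan criterion for block upper-triangular matrices with monomial diagonal
blocks: `[[A, C], [0, B]] ∈ K diag(t^{γ_1},…,t^{γ_{n+m}}) K` iff every entry `c_{ij}` of `C`
is zero or has valuation at least `min {α_i, β_j}`. -/
theorem stmt_1 {L : Type*} [Field L] (v : L → ℤ) (t : L)
    (hv_mul : ∀ x y : L, x ≠ 0 → y ≠ 0 → v (x * y) = v x + v y)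
    (hv_add : ∀ x y : L, x ≠ 0 → y ≠ 0 → x + y ≠ 0 → min (v x) (v y) ≤ v (x + y))
    (hv_surj : ∀ n : ℤ, ∃ x : L, x ≠ 0 ∧ v x = n)
    (ht0 : t ≠ 0) (ht1 : v t = 1)
    (O : Subring L) (hO : ∀ x : L, x ∈ O ↔ x = 0 ∨ 0 ≤ v x)
    (n m : ℕ) (hn : 1 ≤ n) (hm : 1 ≤ m)
    (A : Matrix (Fin n) (Fin n) L) (hA : IsUnit A.det)
    (B : Matrix (Fin m) (Fin m) L) (hB : IsUnit B.det)
    -- `A` is monomial: the unique nonzero entry of row `i` sits in column `ρ i`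
    (ρ : Equiv.Perm (Fin n)) (hAρ : ∀ i j, A i j ≠ 0 ↔ j = ρ i)
    -- `B` is monomial: the unique nonzero entry of column `j` sits in row `π j`
    (π : Equiv.Perm (Fin m)) (hBπ : ∀ i j, B i j ≠ 0 ↔ i = π j)
    (C : Matrix (Fin n) (Fin m) L)
    -- `γ` is the nondecreasing rearrangement of the multiset `{α_1,…,α_n, β_1,…,β_m}`
    (γ : Fin (n + m) → ℤ) (hγmono : Monotone γ)
    (e : Fin (n + m) ≃ (Fin n ⊕ Fin m))
    (hγ : ∀ i, γ i = Sum.elim (fun i' => v (A i' (ρ i'))) (fun j' => v (B (π j') j')) (e i)) :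
    (∃ U V : Matrix (Fin (n + m)) (Fin (n + m)) O, IsUnit U.det ∧ IsUnit V.det ∧
        Matrix.reindex finSumFinEquiv finSumFinEquiv (Matrix.fromBlocks A C 0 B) =
          U.map (fun x => (x : L)) * Matrix.diagonal (fun i => t ^ (γ i)) *
            V.map (fun x => (x : L)))
      ↔ ∀ i j, C i j = 0 ∨ min (v (A i (ρ i))) (v (B (π j) j)) ≤ v (C i j) :=
  stmt_1_general v t hv_mul hv_add ht0 ht1 O hO n m A B ρ hAρ π hBπ C γ e hγ
end

section
/- Let 2 ≤ n < m. For C = (c_{ij}) ∈ M_{n×m}(L) write h(C) = τ_n^{n−1}·σ(C) − C·τ_m^{m−1}. For 1 ≤ i ≤ n let α_i = v(unique nonzero entry of row i of τ_n^{n−1}) (so α_1 = 0 and α_i = 1 for i ≥ 2), and for 1 ≤ j ≤ m let β_j = v(unique nonzero entry of column j of τ_m^{m−1}) (so β_j = 1 for j ≤ m−1 and β_m = 0). Define S = {C ∈ M_{n×m}(L) : for all (i,j), the entry h(C)_{ij} is 0 or has valuation ≥ min{α_i, β_j}}. Then S is an additive subgroup of M_{n×m}(L) containing M_{n×m}(𝒪_L),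 every C ∈ S satisfies c_{i,m} ∈ t^{−1}𝒪_L for 1 ≤ i ≤ n−1, and the map C ↦ (c_{1,m} + 𝒪_L, …, c_{n−1,m} + 𝒪_L) induces a bijection from S / M_{n×m}(𝒪_L) onto (t^{−1}𝒪_L/𝒪_L)^{n−1}. -/
/-!
Index rows and columns from `0`, cyclically. Entry `(a + 1, b)` of `h(C)` is
`t^ε(a) σ(c_{a,b}) - c_{a+1,b+1} t^ε(b)`, where `ε(x) = 0` if `x` is the last index and `1`
otherwise, and its valuation must be at least `min(ε(a), ε(b))`. So each entry is tied to its
successor on the cyclic diagonal `(a, b) ↦ (a + 1, b + 1)`, and once `v(c_{a,b})` is negative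
enough the ultrametric inequality forces `v(c_{a+1,b+1}) = v(c_{a,b}) + ε(a) - ε(b)`. Along such a
step the potential `n m v(c_{a,b}) + n b - m a` drops by `m - n > 0`, so an offending entry of
minimal potential cannot exist. This gives `v ≥ -1` everywhere, and `v ≥ 0` as soon as the free
entries `c_{a,m-1}` (`a < n - 1`) are integral. Conversely, filling the diagonal through each
prescribed last-column entry with its `σ⁻¹`-twists gives an element of `S`.
-/

open Pointwise

/-- The canonical superbasic element `τ_r`: the `r×r` matrix with `t` in position `(r,1)`,
`1` on the superdiagonal, and `0` elsewhere (1-indexed). -/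
def tau {L : Type*} [Field L] (t : L) (r : ℕ) : Matrix (Fin r) (Fin r) L :=
  Matrix.of fun i j =>
    if (i : ℕ) + 1 = (j : ℕ) then 1 else if (i : ℕ) = r - 1 ∧ (j : ℕ) = 0 then t else 0

def tauExp {r : ℕ} (x : Fin (r + 1)) : ℕ := if x = Fin.last r then 0 else 1

lemma tauExp_sub_one {r : ℕ} (i : Fin (r + 1)) :
    tauExp (i - 1) = if (i : ℕ) = 0 then 0 else 1 := by
  have : i - 1 = Fin.last r ↔ (i : ℕ) = 0 := by
    rw [sub_eq_iff_eq_add, Fin.last_add_one, Fin.ext_iff, Fin.val_zero]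
  simp only [tauExp, this]

section Tau

variable {L : Type*} [Field L] (t : L) {r : ℕ}

lemma tau_apply (i j : Fin (r + 1)) :
    tau t (r + 1) i j = if (j : ℕ) = (i + 1) % (r + 1) then t ^ ((i + 1) / (r + 1)) else 0 := by
  have hi := i.isLt
  simp only [tau, Matrix.of_apply, add_tsub_cancel_right]
  rcases (Nat.lt_succ_iff.mp hi).lt_or_eq with hir | hir
  · rw [Nat.mod_eq_of_lt (by omega), Nat.div_eq_of_lt (by omega), pow_zero]
    grind
  · rw [hir, Nat.mod_self, Nat.div_self r.succ_pos, pow_one]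
    grind

lemma tau_mul_apply {ι : Type*} (M : Matrix (Fin (r + 1)) ι L) (i : Fin (r + 1)) (j : ι) :
    (tau t (r + 1) * M) i j = t ^ ((i + 1) / (r + 1)) * M (i + 1) j := by
  rw [Matrix.mul_apply, Finset.sum_eq_single (i + 1)]
  · rw [tau_apply, if_pos (by rw [Fin.val_add, Fin.val_one']; simp [Nat.add_mod])]
  · intro l _ hl
    rw [tau_apply, if_neg, zero_mul]
    contrapose! hl
    ext; rw [hl, Fin.val_add, Fin.val_one']; simp [Nat.add_mod]
  · simp

lemma tau_pow_apply (k : ℕ) (i j : Fin (r + 1)) :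
    (tau t (r + 1) ^ k) i j =
      if (j : ℕ) = (i + k) % (r + 1) then t ^ ((i + k) / (r + 1)) else 0 := by
  induction k generalizing i with
  | zero =>
    simp [Matrix.one_apply, Fin.ext_iff, eq_comm, Nat.mod_eq_of_lt i.isLt, Nat.div_eq_of_lt i.isLt]
  | succ k ih =>
    have hdiv : (i + 1) / (r + 1) + ((i + 1) % (r + 1) + k) / (r + 1) = (i + 1 + k) / (r + 1) := by
      conv_rhs => rw [← Nat.mod_add_div (i + 1) (r + 1), add_right_comm,
        Nat.add_mul_div_left _ _ r.succ_pos]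
      ring
    rw [show (i : ℕ) + (k + 1) = i + 1 + k by ring, pow_succ', tau_mul_apply, ih, Fin.val_add,
      Fin.val_one', Nat.add_mod_mod, Nat.mod_add_mod, mul_ite, mul_zero, ← pow_add, hdiv]

lemma tau_pow_self_apply (i j : Fin (r + 1)) :
    (tau t (r + 1) ^ r) i j = if i = j + 1 then t ^ tauExp j else 0 := by
  have hi := i.isLt
  have hj := j.isLt
  rw [tau_pow_apply, tauExp]
  simp only [Fin.ext_iff, Fin.val_add_one, Fin.val_last]
  rcases Nat.eq_zero_or_pos (i : ℕ) with h | h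
  · rw [h, zero_add, Nat.mod_eq_of_lt r.lt_succ_self, Nat.div_eq_of_lt r.lt_succ_self]
    split_ifs <;> first | rfl | omega | contradiction
  · rw [show (i : ℕ) + r = i - 1 + (r + 1) by omega, Nat.add_mod_right,
      Nat.add_div_right _ r.succ_pos, Nat.mod_eq_of_lt (by omega), Nat.div_eq_of_lt (by omega)]
    split_ifs <;> first | rfl | omega

end Tau

section IntValuation

variable {L : Type*} [Field L] (v : L → ℤ)
  (hv_mul : ∀ x y : L, x ≠ 0 → y ≠ 0 → v (x * y) = v x + v y)
  (hv_add : ∀ x y : L, x ≠ 0 → y ≠ 0 → x + y ≠ 0 → min (v x) (v y) ≤ v (x + y))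

open Classical in
noncomputable def addValuationOfInt : AddValuation L (WithTop ℤ) :=
  AddValuation.of (fun x => if x = 0 then ⊤ else (v x : WithTop ℤ)) (if_pos rfl)
    (by simpa using (hv_mul 1 1 one_ne_zero one_ne_zero).symm)
    (fun x y => by
      by_cases hx : x = 0; · simp [hx]
      by_cases hy : y = 0; · simp [hy]
      by_cases hxy : x + y = 0; · simp [hxy]
      simp only [hx, hy, hxy, if_false]
      exact_mod_cast hv_add x y hx hy hxy)
    (fun x y => by
      by_cases hx : x = 0; · simp [hx]
      by_cases hy : y = 0; · simp [hy]
      simp [hx, hy, hv_mul x y hx hy])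

variable {v hv_mul hv_add}

lemma coe_le_addValuationOfInt_iff {k : ℤ} {x : L} :
    (k : WithTop ℤ) ≤ addValuationOfInt v hv_mul hv_add x ↔ x = 0 ∨ k ≤ v x := by
  by_cases hx : x = 0 <;> simp [addValuationOfInt, hx]

end IntValuation

namespace AddValuation

variable {L : Type*} [Field L] {w : AddValuation L (WithTop ℤ)} {t : L}

lemma map_pow_of_map_eq_one (ht : w t = 1) (e : ℕ) : w (t ^ e) = (e : ℤ) := by
  rw [w.map_pow, ht, nsmul_one]
  rfl

lemma mem_inv_smul_iff (ht : w t = 1) {O : Set L} (hO : ∀ x, x ∈ O ↔ 0 ≤ w x) (x : L) :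
    x ∈ t⁻¹ • O ↔ ((-1 : ℤ) : WithTop ℤ) ≤ w x := by
  have ht0 : t ≠ 0 := fun h => by simp [h] at ht
  rw [Set.mem_inv_smul_set_iff₀ ht0, hO, smul_eq_mul, w.map_mul, ht]
  induction w x using WithTop.recTopCoe with
  | top => simp
  | coe k => norm_cast; omega

end AddValuation

section Potential

variable {n m : ℕ}

/-- `(n+1)(m+1) (k + b/(m+1) - a/(n+1))`: the row index wraps around faster than the column index,
so this drops by `m - n` along every diagonal step. -/
def potential (a : Fin (n + 1)) (b : Fin (m + 1)) (k : ℤ) : ℤ :=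
  (n + 1) * (m + 1) * k + (n + 1) * b - (m + 1) * a

lemma potential_add_one (a : Fin (n + 1)) (b : Fin (m + 1)) (k : ℤ) :
    potential (a + 1) (b + 1) (k + tauExp a - tauExp b) = potential a b k + n - m := by
  have ha := a.isLt
  have hb := b.isLt
  simp only [potential, tauExp, Fin.val_add_one, Fin.ext_iff, Fin.val_last]
  split_ifs <;> push_cast <;> grind

lemma not_of_potential_descent (hnm : n < m) (Bad : Fin (n + 1) → Fin (m + 1) → Prop)
    (f : Fin (n + 1) → Fin (m + 1) → ℤ)
    (hstep : ∀ a b, Bad a b →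
      Bad (a + 1) (b + 1) ∧ f (a + 1) (b + 1) = f a b + tauExp a - tauExp b)
    (a : Fin (n + 1)) (b : Fin (m + 1)) : ¬ Bad a b := by
  classical
  intro hab
  obtain ⟨⟨a₀, b₀⟩, hbad, hmin⟩ :=
    (Finset.univ.filter fun P : Fin (n + 1) × Fin (m + 1) => Bad P.1 P.2).exists_min_image
      (fun P => potential P.1 P.2 (f P.1 P.2)) ⟨(a, b), by simpa⟩
  simp only [Finset.mem_filter, Finset.mem_univ, true_and] at hbad
  obtain ⟨hbad', hf⟩ := hstep a₀ b₀ hbad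
  have := hmin (a₀ + 1, b₀ + 1) (by simpa)
  rw [hf, potential_add_one] at this
  dsimp only at this
  omega

lemma potential_le_of_le_neg_two {a : Fin (n + 1)} {b : Fin (m + 1)} {k : ℤ} (hk : k ≤ -2) :
    potential a b k ≤ -((n + 1) * (m + 1)) - (n + 1) := by
  have ha : (0 : ℤ) ≤ a := by positivity
  have hb : (b : ℤ) ≤ m := by exact_mod_cast Nat.lt_succ_iff.mp b.isLt
  have : ((n : ℤ) + 1) * (m + 1) * k ≤ (n + 1) * (m + 1) * (-2) :=
    mul_le_mul_of_nonneg_left hk (by positivity)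
  simp only [potential]
  nlinarith

lemma add_tauExp_lt_of_potential_le {a : Fin (n + 1)} {b : Fin (m + 1)} {k : ℤ}
    (hk : potential a b k ≤ -((n + 1) * (m + 1)) - (n + 1)) :
    k + tauExp a < min (tauExp a : ℤ) (tauExp b) := by
  have ha : (a : ℤ) ≤ n := by exact_mod_cast Nat.lt_succ_iff.mp a.isLt
  have hb : (0 : ℤ) ≤ b := by positivity
  simp only [potential] at hk
  have hneg : k < 0 := by
    by_contra! h
    have : 0 ≤ ((n : ℤ) + 1) * (m + 1) * k := by positivity
    nlinarith
  rcases eq_or_ne a (Fin.last n) with rfl | ha'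
  · simp [tauExp]; omega
  rcases eq_or_ne b (Fin.last m) with rfl | hb'
  · have : (a : ℤ) < n := by exact_mod_cast Fin.val_lt_last ha'
    have : k ≤ -2 := by
      by_contra! h
      obtain rfl : k = -1 := by omega
      simp only [Fin.val_last] at hk
      nlinarith
    simp [tauExp, ha']; omega
  · simp [tauExp, ha', hb']; omega

end Potential

section Admissible

variable {L : Type*} [Field L] (w : AddValuation L (WithTop ℤ)) (t : L) (σ : L ≃+* L)
  (n m : ℕ)

def defect : Matrix (Fin (n + 1)) (Fin (m + 1)) L →+ Matrix (Fin (n + 1)) (Fin (m + 1)) L where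
  toFun C := tau t (n + 1) ^ n * C.map σ - C * tau t (m + 1) ^ m
  map_zero' := by simp
  map_add' C D := by
    rw [Matrix.map_add _ (map_add σ), Matrix.mul_add, Matrix.add_mul]
    abel

lemma defect_apply_add_one (C : Matrix (Fin (n + 1)) (Fin (m + 1)) L) (a : Fin (n + 1))
    (b : Fin (m + 1)) :
    defect t σ n m C (a + 1) b = t ^ tauExp a * σ (C a b) - C (a + 1) (b + 1) * t ^ tauExp b := by
  simp [defect, Matrix.mul_apply, tau_pow_self_apply, ite_mul, mul_ite]

/-- `t ^ tauExp (i - 1)` and `t ^ tauExp j` are the nonzero entries of row `i` of `τ_{n+1}^n` and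
of column `j` of `τ_{m+1}^m`, so the bound is `min {α_i, β_j}`. -/
def admissible : AddSubgroup (Matrix (Fin (n + 1)) (Fin (m + 1)) L) where
  carrier :=
    {C | ∀ i j, min (w (t ^ tauExp (i - 1))) (w (t ^ tauExp j)) ≤ w (defect t σ n m C i j)}
  zero_mem' := by simp
  add_mem' {C D} hC hD i j := by
    rw [map_add, Matrix.add_apply]
    exact (le_min (hC i j) (hD i j)).trans (w.map_add _ _)
  neg_mem' {C} hC i j := by
    rw [map_neg, Matrix.neg_apply, w.map_neg]
    exact hC i j

variable {w t σ n m}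

lemma mem_admissible_iff {C : Matrix (Fin (n + 1)) (Fin (m + 1)) L} :
    C ∈ admissible w t σ n m ↔ ∀ a b, min (w (t ^ tauExp a)) (w (t ^ tauExp b)) ≤
      w (t ^ tauExp a * σ (C a b) - C (a + 1) (b + 1) * t ^ tauExp b) := by
  refine ((Equiv.addRight 1).forall_congr fun {a} => ?_).symm
  simp [← defect_apply_add_one]

namespace admissible

variable {C : Matrix (Fin (n + 1)) (Fin (m + 1)) L}

lemma val_add_one_add_one (ht : w t = 1) (hσ : ∀ x, w (σ x) = w x)
    (hC : C ∈ admissible w t σ n m) {a : Fin (n + 1)} {b : Fin (m + 1)} {k : ℤ}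
    (hk : w (C a b) = k) (hlt : k + tauExp a < min (tauExp a : ℤ) (tauExp b)) :
    w (C (a + 1) (b + 1)) = ↑(k + tauExp a - tauExp b) := by
  have hrel := mem_admissible_iff.mp hC a b
  rw [w.map_pow_of_map_eq_one ht, w.map_pow_of_map_eq_one ht, ← WithTop.coe_min] at hrel
  have hx : w (t ^ tauExp a * σ (C a b)) = ↑(k + tauExp a) := by
    rw [w.map_mul, w.map_pow_of_map_eq_one ht, hσ, hk, add_comm]
    rfl
  have hy := w.map_eq_of_lt_sub <| (hx.trans_lt (WithTop.coe_lt_coe.mpr hlt)).trans_le <|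
    (w.map_sub_swap _ _).symm.trans_ge hrel
  rw [w.map_mul, w.map_pow_of_map_eq_one ht, hx] at hy
  obtain ⟨k', hk'⟩ := WithTop.ne_top_iff_exists.mp fun h : w (C (a + 1) (b + 1)) = ⊤ => by
    rw [h, top_add] at hy
    exact WithTop.top_ne_coe hy
  rw [← hk'] at hy ⊢
  norm_cast at hy ⊢
  omega

lemma neg_one_le_val (hnm : n < m) (ht : w t = 1) (hσ : ∀ x, w (σ x) = w x)
    (hC : C ∈ admissible w t σ n m) (a : Fin (n + 1)) (b : Fin (m + 1)) :
    ((-1 : ℤ) : WithTop ℤ) ≤ w (C a b) := by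
  let f a b : ℤ := (w (C a b)).untopD 0
  have key := not_of_potential_descent hnm
    (fun a b => w (C a b) = f a b ∧ potential a b (f a b) ≤ -((n + 1) * (m + 1)) - (n + 1)) f ?_
  · by_contra! hlt
    obtain ⟨k, hk⟩ := WithTop.ne_top_iff_exists.mp hlt.ne_top
    rw [← hk, WithTop.coe_lt_coe] at hlt
    refine key a b ⟨by simp [f, ← hk], ?_⟩
    simpa only [f, ← hk, WithTop.untopD_coe] using potential_le_of_le_neg_two (by omega)
  · rintro a b ⟨hk, hΦ⟩
    have hnext := val_add_one_add_one ht hσ hC hk (add_tauExp_lt_of_potential_le hΦ)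
    have hf : f (a + 1) (b + 1) = f a b + tauExp a - tauExp b := by
      simp only [f, hnext, WithTop.untopD_coe]
    refine ⟨⟨by rw [hnext, hf], ?_⟩, hf⟩
    rw [hf, potential_add_one]
    omega

lemma nonneg_val_of_lastCol (hnm : n < m) (ht : w t = 1) (hσ : ∀ x, w (σ x) = w x)
    (hC : C ∈ admissible w t σ n m) (hlast : ∀ a, a ≠ Fin.last n → 0 ≤ w (C a (Fin.last m)))
    (a : Fin (n + 1)) (b : Fin (m + 1)) : 0 ≤ w (C a b) := by
  refine not_lt.mp <| not_of_potential_descent hnm (fun a b => w (C a b) < 0)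
    (fun a b => (w (C a b)).untopD 0) (fun a b hneg => ?_) a b
  have hk : w (C a b) = ((-1 : ℤ) : WithTop ℤ) := by
    obtain ⟨k, hk⟩ := WithTop.ne_top_iff_exists.mp hneg.ne_top
    have := neg_one_le_val hnm ht hσ hC a b
    rw [← hk] at hneg this ⊢
    norm_cast at hneg this ⊢
    omega
  have hwrap : ¬ (a ≠ Fin.last n ∧ b = Fin.last m) := by
    rintro ⟨ha, rfl⟩
    have := hlast a ha
    rw [hk] at this
    norm_cast at this
  have hlt : -1 + tauExp a < min (tauExp a : ℤ) (tauExp b) := by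
    simp only [tauExp]; split_ifs <;> simp_all
  have hnext := val_add_one_add_one ht hσ hC hk hlt
  refine ⟨?_, by simp only [hnext, hk, WithTop.untopD_coe]⟩
  rw [hnext]
  norm_cast
  simp only [tauExp]; split_ifs <;> simp_all

lemma mem_of_integral (hσ : ∀ x, w (σ x) = w x) (hC : ∀ a b, 0 ≤ w (C a b)) :
    C ∈ admissible w t σ n m := by
  refine mem_admissible_iff.mpr fun a b => le_trans ?_ (w.map_sub _ _)
  rw [w.map_mul, w.map_mul, hσ]
  exact min_le_min (le_add_of_nonneg_right (hC _ _)) (le_add_of_nonneg_left (hC _ _))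

end admissible

variable (σ n m)

/-- Consecutive entries on the diagonal ending at `(r, m)`, `r < n`, differ by `σ`, so the interior
of the defect vanishes; all other entries are `0`. -/
def lastColFill (d : Fin n → L) : Matrix (Fin (n + 1)) (Fin (m + 1)) L :=
  Matrix.of fun a b => σ.symm^[m - b] (if h : (a : ℕ) + (m - b) < n then d ⟨_, h⟩ else 0)

variable {σ n m} (d : Fin n → L)

lemma lastColFill_castSucc_last (i : Fin n) :
    lastColFill σ n m d i.castSucc (Fin.last m) = d i := by
  simp [lastColFill]

lemma lastColFill_last (b : Fin (m + 1)) : lastColFill σ n m d (Fin.last n) b = 0 := by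
  simp [lastColFill]

lemma lastColFill_zero (hnm : n ≤ m) (a : Fin (n + 1)) : lastColFill σ n m d a 0 = 0 := by
  simp [lastColFill, dif_neg (show ¬ (a : ℕ) + m < n by omega), iterate_map_zero]

lemma apply_lastColFill {a : Fin (n + 1)} {b : Fin (m + 1)} (ha : a ≠ Fin.last n)
    (hb : b ≠ Fin.last m) :
    σ (lastColFill σ n m d a b) = lastColFill σ n m d (a + 1) (b + 1) := by
  have hb' : (b : ℕ) < m := Fin.val_lt_last hb
  simp only [lastColFill, Matrix.of_apply, Fin.val_add_one, if_neg ha, if_neg hb]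
  rw [show m - b = m - (b + 1) + 1 by omega,
    show (a : ℕ) + (m - (b + 1) + 1) = a + 1 + (m - (b + 1)) by omega,
    Function.iterate_succ_apply', σ.apply_symm_apply]

lemma neg_one_le_val_lastColFill (hσ : ∀ x, w (σ x) = w x)
    (hd : ∀ i, ((-1 : ℤ) : WithTop ℤ) ≤ w (d i)) (a : Fin (n + 1)) (b : Fin (m + 1)) :
    ((-1 : ℤ) : WithTop ℤ) ≤ w (lastColFill σ n m d a b) := by
  have hsymm : w ∘ σ.symm = w := funext fun x => by simp [← hσ (σ.symm x)]
  change _ ≤ (w ∘ σ.symm^[m - b]) _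
  rw [Function.iterate_invariant hsymm]
  split_ifs
  · exact hd _
  · simp

lemma lastColFill_mem_admissible (hnm : n < m) (ht : w t = 1) (hσ : ∀ x, w (σ x) = w x)
    (hd : ∀ i, ((-1 : ℤ) : WithTop ℤ) ≤ w (d i)) :
    lastColFill σ n m d ∈ admissible w t σ n m := by
  refine mem_admissible_iff.mpr fun a b => ?_
  by_cases hwrap : a = Fin.last n ∨ b = Fin.last m
  · have hval : ∀ a b, 0 ≤ w t + w (lastColFill σ n m d a b) := fun a b => by
      rw [ht, show (0 : WithTop ℤ) = 1 + ((-1 : ℤ) : WithTop ℤ) by norm_cast]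
      gcongr
      exact neg_one_le_val_lastColFill d hσ hd a b
    have hmin : min (w (t ^ tauExp a)) (w (t ^ tauExp b)) ≤ 0 := by
      rcases hwrap with rfl | rfl
      · exact min_le_of_left_le (by simp [tauExp])
      · exact min_le_of_right_le (by simp [tauExp])
    have hleft : 0 ≤ w (t ^ tauExp a * σ (lastColFill σ n m d a b)) := by
      by_cases ha : a = Fin.last n
      · simp [ha, lastColFill_last]
      · simpa [tauExp, ha, hσ] using hval a b
    have hright : 0 ≤ w (lastColFill σ n m d (a + 1) (b + 1) * t ^ tauExp b) := by
      by_cases hb : b = Fin.last m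
      · simp [hb, lastColFill_zero d hnm.le]
      · simpa [tauExp, hb, add_comm (w t)] using hval (a + 1) (b + 1)
    exact hmin.trans ((le_min hleft hright).trans (w.map_sub _ _))
  · obtain ⟨ha, hb⟩ := not_or.mp hwrap
    simp [tauExp, ha, hb, apply_lastColFill d ha hb, mul_comm]

end Admissible

lemma coe_admissible_addValuationOfInt {L : Type*} [Field L] {v : L → ℤ}
    {hv_mul : ∀ x y : L, x ≠ 0 → y ≠ 0 → v (x * y) = v x + v y}
    {hv_add : ∀ x y : L, x ≠ 0 → y ≠ 0 → x + y ≠ 0 → min (v x) (v y) ≤ v (x + y)}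
    {t : L} (ht : addValuationOfInt v hv_mul hv_add t = 1) {σ : L ≃+* L} {n m : ℕ}
    {α : Fin (n + 1) → ℤ} (hα : ∀ i, α i = if (i : ℕ) = 0 then 0 else 1)
    {β : Fin (m + 1) → ℤ} (hβ : ∀ j, β j = if (j : ℕ) = m then 0 else 1) :
    (admissible (addValuationOfInt v hv_mul hv_add) t σ n m : Set _) =
      {C | ∀ i j, defect t σ n m C i j = 0 ∨
        min (α i) (β j) ≤ v (defect t σ n m C i j)} := by
  ext C
  refine forall₂_congr fun i j => ?_
  rw [AddValuation.map_pow_of_map_eq_one ht, AddValuation.map_pow_of_map_eq_one ht,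
    ← WithTop.coe_min, coe_le_addValuationOfInt_iff, hα, hβ, tauExp_sub_one, tauExp]
  simp only [Fin.ext_iff, Fin.val_last, Nat.cast_ite, Nat.cast_zero, Nat.cast_one]

/-- The dual Drinfeld two-block configuration `(τ_n^{n−1}, τ_m^{m−1})` for
`2 ≤ n < m`: with `α_1 = 0`, `α_i = 1 (i ≥ 2)` and `β_j = 1 (j ≤ m−1)`, `β_m = 0`, the set
`S = {C : each entry of τ_n^{n−1} σ(C) − C τ_m^{m−1} is 0 or has valuation ≥ min{α_i,β_j}}`
is an additive subgroup of `M_{n×m}(L)` containing `M_{n×m}(𝒪_L)`, every `C ∈ S` has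
`c_{i,m} ∈ t⁻¹𝒪_L` for `1 ≤ i ≤ n−1`, and `C ↦ (c_{1,m} + 𝒪_L, …, c_{n−1,m} + 𝒪_L)`
induces a bijection `S / M_{n×m}(𝒪_L) ≃ (t⁻¹𝒪_L/𝒪_L)^{n−1}`. -/
theorem stmt_11 {L : Type*} [Field L] (v : L → ℤ) (t : L)
    (hv_mul : ∀ x y : L, x ≠ 0 → y ≠ 0 → v (x * y) = v x + v y)
    (hv_add : ∀ x y : L, x ≠ 0 → y ≠ 0 → x + y ≠ 0 → min (v x) (v y) ≤ v (x + y))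
    (ht0 : t ≠ 0) (ht1 : v t = 1)
    (O : Subring L) (hO : ∀ x : L, x ∈ O ↔ x = 0 ∨ 0 ≤ v x)
    (σ : L ≃+* L) (hσv : ∀ x : L, x ≠ 0 → v (σ x) = v x)
    (n m : ℕ) (hn : 2 ≤ n) (hnm : n < m)
    (α : Fin n → ℤ) (hα : ∀ i, α i = if (i : ℕ) = 0 then 0 else 1)
    (β : Fin m → ℤ) (hβ : ∀ j, β j = if (j : ℕ) = m - 1 then 0 else 1)
    (S : Set (Matrix (Fin n) (Fin m) L))
    (hS : S = {C | ∀ i j,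
        (tau t n ^ (n - 1) * C.map ⇑σ - C * tau t m ^ (m - 1)) i j = 0 ∨
          min (α i) (β j) ≤ v ((tau t n ^ (n - 1) * C.map ⇑σ - C * tau t m ^ (m - 1)) i j)}) :
    -- `S` is an additive subgroup of `M_{n×m}(L)` containing `M_{n×m}(𝒪_L)`
    (0 ∈ S) ∧
    (∀ C₁ ∈ S, ∀ C₂ ∈ S, C₁ + C₂ ∈ S) ∧
    (∀ C ∈ S, -C ∈ S) ∧
    (∀ C : Matrix (Fin n) (Fin m) L, (∀ i j, C i j ∈ O) → C ∈ S) ∧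
    -- every `C ∈ S` has `c_{i,m} ∈ t⁻¹𝒪_L` for `1 ≤ i ≤ n−1`
    (∀ C ∈ S, ∀ i : Fin n, (i : ℕ) < n - 1 →
      C i (⟨m - 1, by omega⟩ : Fin m) ∈ t⁻¹ • (O : Set L)) ∧
    -- the last-column map separates points of `S` exactly modulo `M_{n×m}(𝒪_L)`
    (∀ C₁ ∈ S, ∀ C₂ ∈ S,
      ((∀ i : Fin (n - 1),
          (QuotientAddGroup.mk (C₁ (Fin.castLE (by omega) i) (⟨m - 1, by omega⟩ : Fin m)) :
              L ⧸ O.toAddSubgroup) =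
            QuotientAddGroup.mk (C₂ (Fin.castLE (by omega) i) (⟨m - 1, by omega⟩ : Fin m)))
        ↔ ∀ i j, (C₁ - C₂) i j ∈ O)) ∧
    -- the last-column map hits every element of `(t⁻¹𝒪_L/𝒪_L)^{n−1}`
    (∀ y : Fin (n - 1) → L ⧸ O.toAddSubgroup,
      (∀ i, ∃ c ∈ t⁻¹ • (O : Set L), QuotientAddGroup.mk c = y i) →
      ∃ C ∈ S, ∀ i : Fin (n - 1),
        (QuotientAddGroup.mk (C (Fin.castLE (by omega) i) (⟨m - 1, by omega⟩ : Fin m)) :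
            L ⧸ O.toAddSubgroup) = y i) := by
  obtain ⟨n, rfl⟩ : ∃ n', n = n' + 1 := ⟨n - 1, by omega⟩
  obtain ⟨m, rfl⟩ : ∃ m', m = m' + 1 := ⟨m - 1, by omega⟩
  simp only [Nat.add_sub_cancel] at hβ hS ⊢
  replace hnm : n < m := by omega
  set w := addValuationOfInt v hv_mul hv_add
  have ht : w t = 1 := by simp [w, addValuationOfInt, ht0, ht1]
  have hσ : ∀ x, w (σ x) = w x := fun x => by
    by_cases hx : x = 0 <;> simp [w, addValuationOfInt, hx, hσv]
  have hOw : ∀ x, x ∈ O ↔ 0 ≤ w x := fun x => by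
    rw [hO, ← WithTop.coe_zero, coe_le_addValuationOfInt_iff]
  have htO := w.mem_inv_smul_iff ht (O := O) hOw
  obtain rfl : S = admissible w t σ n m :=
    hS.trans (coe_admissible_addValuationOfInt ht hα hβ).symm
  refine ⟨zero_mem _, fun _ h₁ _ h₂ => add_mem h₁ h₂, fun _ h => neg_mem h,
    fun C hC => admissible.mem_of_integral hσ fun a b => (hOw _).mp (hC a b),
    fun C hC i _ => (htO _).mpr (admissible.neg_one_le_val hnm ht hσ hC i (Fin.last m)),
    fun C₁ hC₁ C₂ hC₂ =>
      ⟨fun h i j => ?_, fun h _ => QuotientAddGroup.eq_iff_sub_mem.mpr (h _ _)⟩,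
    fun y hy => ?_⟩
  · refine (hOw _).mpr <| admissible.nonneg_val_of_lastCol hnm ht hσ (sub_mem hC₁ hC₂)
      (fun a ha => ?_) i j
    exact (hOw _).mp (QuotientAddGroup.eq_iff_sub_mem.mp (h ⟨a, Fin.val_lt_last ha⟩))
  · choose d hd hdy using hy
    have hd' i := (htO _).mp (hd i)
    refine ⟨lastColFill σ n m d, lastColFill_mem_admissible d hnm ht hσ hd', fun i => ?_⟩
    exact (congrArg _ (lastColFill_castSucc_last d i)).trans (hdy i)
end
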